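/- arXiv:2604.23621 — 2 statements merged into one kernel-verified Lean document; each statement's English description precedes it below -/
import Mathlib

section
/- Let L > 0 and let γ : ℝ → ℝ³ be continuously differentiable and L-periodic (γ(s + L) = γ(s) for all s) with ‖γ'(s)‖ = 1 for all s. Then ∫₀^L ∫₀^L ‖γ(s) − γ(t)‖² ds dt ≤ L⁴/(2π²). Equivalently, with D₂(γ) = ((1/L²) ∫₀^L ∫₀^L ‖γ(s) − γ(t)‖² ds dt)^{1/2}, every such closed curve satisfies L / D₂(γ) ≥ √2 · π, with equality for the round circle. -/
/-!
Subtracting the centroid `c` of the curve, the cross terms of `‖(γ s - c) - (γ t - c)‖²` integrate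
to zero, so the double integral equals `2L ∫ ‖γ - c‖²`. Wirtinger's inequality for the mean-zero
periodic function `γ - c` (Parseval, together with `‖f̂ n‖ = L / (2π|n|) ‖f̂' n‖` for `n ≠ 0`)
bounds this by `2L (L / 2π)² ∫ ‖γ'‖² = 2L (L / 2π)² L = L⁴ / (2π²)`.
-/

open MeasureTheory Real

theorem ContinuousOn.memLp_restrict {α E : Type*} [TopologicalSpace α] [T2Space α]
    [MeasurableSpace α] [OpensMeasurableSpace α] {μ : Measure α} [IsFiniteMeasureOnCompacts μ]
    [NormedAddCommGroup E] {f : α → E} {s : Set α} (hs : IsCompact s) (hf : ContinuousOn f s)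
    (p : ENNReal) : MemLp f p (μ.restrict s) :=
  haveI : IsFiniteMeasure (μ.restrict s) := isFiniteMeasure_restrict.2 hs.measure_lt_top.ne
  let ⟨C, hC⟩ := hs.exists_bound_of_continuousOn hf
  .of_bound (hf.aestronglyMeasurable_of_isCompact hs hs.measurableSet) C
    ((ae_restrict_iff' hs.measurableSet).2 (ae_of_all _ hC))

theorem norm_fourierCoeffOn_le_of_hasDerivAt {a b : ℝ} (hab : a < b) {f f' : ℝ → ℂ} {n : ℤ}
    (hn : n ≠ 0) (hf : ∀ x ∈ Set.uIcc a b, HasDerivAt f (f' x) x)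
    (hf' : IntervalIntegrable f' volume a b) (hfab : f a = f b) :
    ‖fourierCoeffOn hab f n‖ ≤ (b - a) / (2 * π) * ‖fourierCoeffOn hab f' n‖ := by
  have hba : 0 < b - a := sub_pos.2 hab
  have hn1 : (1 : ℝ) ≤ |(n : ℝ)| := by exact_mod_cast Int.one_le_abs hn
  have hnorm : ‖(1 : ℂ) / (-2 * π * Complex.I * n)‖ = 1 / (2 * π * |(n : ℝ)|) := by
    simp [abs_of_pos pi_pos]
  rw [fourierCoeffOn_of_hasDerivAt hab hn hf hf', hfab, sub_self, mul_zero, zero_sub,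
    norm_mul, norm_neg, norm_mul, hnorm, ← Complex.ofReal_sub, Complex.norm_real,
    Real.norm_of_nonneg hba.le]
  calc 1 / (2 * π * |(n : ℝ)|) * ((b - a) * ‖fourierCoeffOn hab f' n‖)
      = (b - a) / (2 * π) * ‖fourierCoeffOn hab f' n‖ / |(n : ℝ)| := by ring
    _ ≤ (b - a) / (2 * π) * ‖fourierCoeffOn hab f' n‖ := div_le_self (by positivity) hn1

theorem fourierCoeffOn_zero {E : Type*} [NormedAddCommGroup E] [NormedSpace ℂ E] {a b : ℝ}
    (hab : a < b) (f : ℝ → E) : fourierCoeffOn hab f 0 = (b - a)⁻¹ • ∫ x in a..b, f x := by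
  simp [fourierCoeffOn_eq_integral _ 0 hab]

theorem wirtinger_inequality_complex {a b : ℝ} (hab : a < b) {f f' : ℝ → ℂ}
    (hf : ∀ x ∈ Set.uIcc a b, HasDerivAt f (f' x) x) (hf' : ContinuousOn f' (Set.uIcc a b))
    (hfab : f a = f b) (hmean : ∫ x in a..b, f x = 0) :
    ∫ x in a..b, ‖f x‖ ^ 2 ≤ ((b - a) / (2 * π)) ^ 2 * ∫ x in a..b, ‖f' x‖ ^ 2 := by
  have hfc : ContinuousOn f (Set.uIcc a b) := fun x hx =>
    (hf x hx).continuousAt.continuousWithinAt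
  have hL2 : ∀ {g : ℝ → ℂ}, ContinuousOn g (Set.uIcc a b) →
      MemLp g 2 (volume.restrict (Set.Ioc a b)) := fun hg =>
    (hg.memLp_restrict isCompact_uIcc 2).mono_measure
      (Measure.restrict_mono (Set.Ioc_subset_Icc_self.trans Set.Icc_subset_uIcc) le_rfl)
  have hcoeff : ∀ n, ‖fourierCoeffOn hab f n‖ ^ 2
      ≤ ((b - a) / (2 * π)) ^ 2 * ‖fourierCoeffOn hab f' n‖ ^ 2 := by
    intro n
    rcases eq_or_ne n 0 with rfl | hn
    · rw [fourierCoeffOn_zero, hmean, smul_zero, norm_zero, zero_pow two_ne_zero]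
      positivity
    · rw [← mul_pow]
      exact pow_le_pow_left₀ (norm_nonneg _)
        (norm_fourierCoeffOn_le_of_hasDerivAt hab hn hf hf'.intervalIntegrable hfab) 2
  have h := hasSum_le hcoeff (hasSum_sq_fourierCoeffOn hab (hL2 hfc))
    ((hasSum_sq_fourierCoeffOn hab (hL2 hf')).mul_left _)
  rw [smul_eq_mul, smul_eq_mul, mul_left_comm] at h
  exact le_of_mul_le_mul_left h (inv_pos.2 (sub_pos.2 hab))

theorem wirtinger_inequality_real {a b : ℝ} (hab : a < b) {f f' : ℝ → ℝ}
    (hf : ∀ x ∈ Set.uIcc a b, HasDerivAt f (f' x) x) (hf' : ContinuousOn f' (Set.uIcc a b))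
    (hfab : f a = f b) (hmean : ∫ x in a..b, f x = 0) :
    ∫ x in a..b, f x ^ 2 ≤ ((b - a) / (2 * π)) ^ 2 * ∫ x in a..b, f' x ^ 2 := by
  have h := wirtinger_inequality_complex hab (f := fun x => (f x : ℂ)) (f' := fun x => (f' x : ℂ))
    (fun x hx => (hf x hx).ofReal_comp) (Complex.continuous_ofReal.comp_continuousOn hf')
    (congrArg _ hfab) (by rw [intervalIntegral.integral_ofReal, hmean, Complex.ofReal_zero])
  simpa only [Complex.norm_real, Real.norm_eq_abs, sq_abs] using h

theorem wirtinger_inequality_euclideanSpace {ι : Type*} [Fintype ι] {a b : ℝ} (hab : a < b)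
    {f f' : ℝ → EuclideanSpace ℝ ι} (hf : ∀ x ∈ Set.uIcc a b, HasDerivAt f (f' x) x)
    (hf' : ContinuousOn f' (Set.uIcc a b)) (hfab : f a = f b) (hmean : ∫ x in a..b, f x = 0) :
    ∫ x in a..b, ‖f x‖ ^ 2 ≤ ((b - a) / (2 * π)) ^ 2 * ∫ x in a..b, ‖f' x‖ ^ 2 := by
  have hfc : ContinuousOn f (Set.uIcc a b) := fun x hx =>
    (hf x hx).continuousAt.continuousWithinAt
  have hsum : ∀ {g : ℝ → EuclideanSpace ℝ ι}, ContinuousOn g (Set.uIcc a b) →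
      ∫ x in a..b, ‖g x‖ ^ 2 = ∑ i, ∫ x in a..b, g x i ^ 2 := fun hg => by
    simp_rw [EuclideanSpace.real_norm_sq_eq]
    exact intervalIntegral.integral_finsetSum fun i _ =>
      (((EuclideanSpace.proj i).continuous.comp_continuousOn hg).pow 2).intervalIntegrable
  rw [hsum hfc, hsum hf', Finset.mul_sum]
  refine Finset.sum_le_sum fun i _ => wirtinger_inequality_real hab
    (fun x hx => (EuclideanSpace.proj (𝕜 := ℝ) i).hasFDerivAt.comp_hasDerivAt x (hf x hx))
    ((EuclideanSpace.proj i).continuous.comp_continuousOn hf') (by rw [hfab]) ?_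
  have h := (EuclideanSpace.proj (𝕜 := ℝ) i).intervalIntegral_comp_comm
    (hfc.intervalIntegrable (μ := volume))
  rw [hmean, map_zero] at h
  exact h

theorem intervalIntegral.integral_sub_average {E : Type*} [NormedAddCommGroup E]
    [NormedSpace ℝ E] [CompleteSpace E] {f : ℝ → E} {a b : ℝ} (hab : a ≠ b)
    (hf : IntervalIntegrable f volume a b) :
    ∫ x in a..b, (f x - (b - a)⁻¹ • ∫ y in a..b, f y) = 0 := by
  rw [intervalIntegral.integral_sub hf intervalIntegrable_const, intervalIntegral.integral_const,
    smul_smul, mul_inv_cancel₀ (sub_ne_zero.2 hab.symm), one_smul, sub_self]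

theorem intervalIntegral.integral_integral_norm_sub_sq {E : Type*} [NormedAddCommGroup E]
    [InnerProductSpace ℝ E] [CompleteSpace E] {g : ℝ → E} {a b : ℝ}
    (hg : IntervalIntegrable g volume a b)
    (hg2 : IntervalIntegrable (fun t => ‖g t‖ ^ 2) volume a b)
    (hmean : ∫ t in a..b, g t = 0) :
    ∫ s in a..b, ∫ t in a..b, ‖g s - g t‖ ^ 2 = 2 * (b - a) * ∫ t in a..b, ‖g t‖ ^ 2 := by
  have hinner : ∀ v, IntervalIntegrable (fun t => 2 * inner ℝ v (g t)) volume a b := fun v =>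
    (intervalIntegrable_iff.2 ((intervalIntegrable_iff.1 hg).const_inner (𝕜 := ℝ) v)).const_mul 2
  have hslice : ∀ s, ∫ t in a..b, ‖g s - g t‖ ^ 2
      = (b - a) * ‖g s‖ ^ 2 + ∫ t in a..b, ‖g t‖ ^ 2 := fun s => by
    simp_rw [norm_sub_sq_real]
    rw [intervalIntegral.integral_add (intervalIntegrable_const.sub (hinner _)) hg2,
      intervalIntegral.integral_sub intervalIntegrable_const (hinner _),
      intervalIntegral.integral_const_mul]
    have h := (innerSL ℝ (g s)).intervalIntegral_comp_comm hg
    simp only [innerSL_apply_apply, hmean, inner_zero_right] at h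
    simp [h]
  simp_rw [hslice]
  rw [intervalIntegral.integral_add (hg2.const_mul _) intervalIntegrable_const,
    intervalIntegral.integral_const_mul, intervalIntegral.integral_const, smul_eq_mul]
  ring

theorem mean_square_chord_bound
    (L : ℝ) (hL : 0 < L) (γ : ℝ → EuclideanSpace ℝ (Fin 3))
    (hC1 : ContDiff ℝ 1 γ)
    (hper : ∀ s, γ (s + L) = γ s)
    (hunit : ∀ s, ‖deriv γ s‖ = 1) :
    ∫ s in (0:ℝ)..L, ∫ t in (0:ℝ)..L, ‖γ s - γ t‖ ^ 2
      ≤ L ^ 4 / (2 * Real.pi ^ 2) := by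
  have hγ : Continuous γ := hC1.continuous
  have hderiv : ∀ x, HasDerivAt γ (deriv γ x) x := fun x =>
    (hC1.differentiable one_ne_zero x).hasDerivAt
  set c := L⁻¹ • ∫ s in (0:ℝ)..L, γ s
  have hmean : ∫ s in (0:ℝ)..L, (γ s - c) = 0 := by
    simpa using intervalIntegral.integral_sub_average hL.ne (hγ.intervalIntegrable 0 L)
  have hchord : ∫ s in (0:ℝ)..L, ∫ t in (0:ℝ)..L, ‖γ s - γ t‖ ^ 2
      = 2 * L * ∫ s in (0:ℝ)..L, ‖γ s - c‖ ^ 2 := by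
    simpa [c] using intervalIntegral.integral_integral_norm_sub_sq
      ((hγ.sub continuous_const).intervalIntegrable 0 L)
      (((hγ.sub continuous_const).norm.pow 2).intervalIntegrable 0 L) hmean
  have hwirtinger := wirtinger_inequality_euclideanSpace hL (f := fun s => γ s - c)
    (fun x _ => (hderiv x).sub_const c) (hC1.continuous_deriv le_rfl).continuousOn
    (by simpa using (hper 0).symm) hmean
  simp only [hunit, sub_zero, one_pow, intervalIntegral.integral_const, smul_eq_mul,
    mul_one] at hwirtinger
  rw [hchord]
  calc 2 * L * ∫ s in (0:ℝ)..L, ‖γ s - c‖ ^ 2 ≤ 2 * L * ((L / (2 * π)) ^ 2 * L) := by gcongr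
    _ = L ^ 4 / (2 * π ^ 2) := by field_simp
end

section
/- Let −1 < p < 0. Let η : ℝ → ℝ³ and η_m : ℝ → ℝ³ (m ∈ ℕ) be continuous 1-periodic maps such that η_m → η uniformly, η is injective on [0, 1), and there exist constants c > 0 and δ ∈ (0, 1/2] such that ‖η_m(u) − η_m(v)‖ ≥ c · d₁(u, v) for all m and all u, v with d₁(u, v) ≤ δ. Then the kernels K_m(u, v) = ‖η_m(u) − η_m(v)‖^p are uniformly integrable on [0, 1]²: each K_m is Lebesgue-integrable on [0,1]², and for every ε > 0 there exists δ' > 0 such that for every m and every measurable set A ⊆ [0, 1]² of Lebesgue measure at most δ', one has ∫_A K_m(u, v) du dv ≤ ε. -/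
open MeasureTheory Filter Topology

/-- Circular distance on the parameter circle of circumference `L`:
`d_L(s, t) = min_{k ∈ ℤ} |s - t + k L|`. -/
noncomputable def circDist (L s t : ℝ) : ℝ := ⨅ k : ℤ, |s - t + k * L|

/-!
Fix `u` and an arc `I` of length at most `δ`, and let `w ∈ I` minimise `v ↦ ‖γ u - γ v‖` on `I`.
The chord-arc bound at `(v, w)` and the triangle inequality through `γ u` give
`‖γ u - γ v‖ ≥ (c/2) |v - w|` on `I`. So the part of `I` where `‖γ u - γ v‖ ≤ cρ/2` lies in
`[w - ρ, w + ρ]`, and there the kernel is at most `(c/2)^p |v - w|^p`, whose integral is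
`O(ρ^(p+1))` because `p > -1`. Covering `[0, 1]` by finitely many such arcs, the integral of the
kernel over the region where it exceeds `(cρ/2)^p` is `O(ρ^(p+1))` uniformly in the curve. On the
finite measure space `[0, 1]²` such a uniform tail bound implies uniform integrability, and with it
a uniform bound on the `L¹` norms.
-/

open Set Metric
open scoped ENNReal

lemma lintegral_biUnion_finset_le {α ι : Type*} [MeasurableSpace α] {μ : Measure α}
    (t : Finset ι) (s : ι → Set α) (f : α → ℝ≥0∞) :
    ∫⁻ a in ⋃ i ∈ t, s i, f a ∂μ ≤ ∑ i ∈ t, ∫⁻ a in s i, f a ∂μ :=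
  calc ∫⁻ a in ⋃ i ∈ t, s i, f a ∂μ = ∫⁻ a in ⋃ i : t, s i, f a ∂μ := by
        rw [iUnion_subtype]
    _ ≤ ∑' i : t, ∫⁻ a in s i, f a ∂μ := lintegral_iUnion_le _ _
    _ = ∑ i ∈ t, ∫⁻ a in s i, f a ∂μ := by
        rw [tsum_fintype]
        exact Finset.sum_coe_sort t fun i => ∫⁻ a in s i, f a ∂μ

lemma MeasureTheory.UnifIntegrable.exists_setIntegral_le {α ι : Type*} [MeasurableSpace α]
    {μ : Measure α} {S : Set α} {f : ι → α → ℝ} (hf : UnifIntegrable f 1 (μ.restrict S))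
    {ε : ℝ} (hε : 0 < ε) :
    ∃ δ > 0, ∀ i A, MeasurableSet A → A ⊆ S → μ A ≤ ENNReal.ofReal δ →
      ∫ x in A, f i x ∂μ ≤ ε := by
  obtain ⟨δ, hδ, h⟩ := hf hε
  refine ⟨δ, hδ, fun i A hA hAS hμA => ?_⟩
  have hrestrict : (μ.restrict S).restrict A = μ.restrict A := by
    rw [Measure.restrict_restrict hA, inter_eq_left.2 hAS]
  have hnorm := h i A hA (by rwa [Measure.restrict_apply hA, inter_eq_left.2 hAS])
  rw [eLpNorm_indicator_eq_eLpNorm_restrict hA, hrestrict, eLpNorm_one_eq_lintegral_enorm]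
    at hnorm
  exact (ENNReal.ofReal_le_ofReal_iff hε.le).1 <|
    (Real.ofReal_le_enorm _).trans ((enorm_integral_le_lintegral_enorm _).trans hnorm)

lemma exists_pos_mul_rpow_le {q : ℝ} (hq : 0 < q) (A : ℝ) {ε : ℝ} (hε : 0 < ε) :
    ∃ ρ > 0, A * ρ ^ q ≤ ε := by
  have h : Tendsto (fun ρ : ℝ => A * ρ ^ q) (𝓝[>] 0) (𝓝 0) := by
    simpa [Real.zero_rpow hq.ne'] using
      (((Real.continuous_rpow_const hq.le).tendsto 0).const_mul A).mono_left nhdsWithin_le_nhds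
  obtain ⟨ρ, hρε, hρ⟩ := ((h.eventually (ge_mem_nhds hε)).and self_mem_nhdsWithin).exists
  exact ⟨ρ, hρ, hρε⟩

lemma lintegral_Icc_rpow {p : ℝ} (hp : -1 < p) {ρ : ℝ} (hρ : 0 ≤ ρ) :
    ∫⁻ x in Icc 0 ρ, ENNReal.ofReal (x ^ p) = ENNReal.ofReal (ρ ^ (p + 1) / (p + 1)) := by
  have hint : IntegrableOn (fun x : ℝ => x ^ p) (Ioc 0 ρ) :=
    (intervalIntegrable_iff_integrableOn_Ioc_of_le hρ).1
      (intervalIntegral.intervalIntegrable_rpow' hp)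
  rw [setLIntegral_congr Ioc_ae_eq_Icc.symm, ← ofReal_integral_eq_lintegral_ofReal hint
    (ae_restrict_of_forall_mem measurableSet_Ioc fun x hx => Real.rpow_nonneg hx.1.le p),
    ← intervalIntegral.integral_of_le hρ, integral_rpow (Or.inl hp),
    Real.zero_rpow (by linarith), sub_zero]

lemma lintegral_closedBall_rpow_dist_le {p : ℝ} (hp : -1 < p) (w : ℝ) {ρ : ℝ} (hρ : 0 ≤ ρ) :
    ∫⁻ v in closedBall w ρ, ENNReal.ofReal (dist v w ^ p) ≤
      ENNReal.ofReal (2 * (ρ ^ (p + 1) / (p + 1))) := by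
  set φ : ℝ → ℝ≥0∞ := (closedBall 0 ρ).indicator fun x => ENNReal.ofReal (|x| ^ p)
  set ψ : ℝ → ℝ≥0∞ := (Icc 0 ρ).indicator fun x => ENNReal.ofReal (x ^ p)
  have hψ : Measurable ψ :=
    (by fun_prop : Measurable fun x : ℝ => ENNReal.ofReal (x ^ p)).indicator measurableSet_Icc
  have hφψ : ∀ x, φ x ≤ ψ x + ψ (-x) := by
    intro x
    simp only [φ]
    by_cases hx : |x| ≤ ρ
    · rw [indicator_of_mem (show x ∈ closedBall 0 ρ by simpa using hx)]
      rcases le_total 0 x with h | h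
      · rw [abs_of_nonneg h] at hx ⊢
        exact (indicator_of_mem (show x ∈ Icc 0 ρ from ⟨h, hx⟩)
          fun x => ENNReal.ofReal (x ^ p)).ge.trans le_self_add
      · rw [abs_of_nonpos h] at hx ⊢
        exact (indicator_of_mem (show -x ∈ Icc 0 ρ from ⟨neg_nonneg.2 h, hx⟩)
          fun x => ENNReal.ofReal (x ^ p)).ge.trans le_add_self
    · rw [indicator_of_notMem (show x ∉ closedBall 0 ρ by simpa using hx)]
      exact zero_le
  calc ∫⁻ v in closedBall w ρ, ENNReal.ofReal (dist v w ^ p) = ∫⁻ v, φ (v - w) := by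
        rw [← lintegral_indicator measurableSet_closedBall]
        congr 1 with v
        simp [φ, indicator, Real.dist_eq]
    _ = ∫⁻ x, φ x := lintegral_sub_right_eq_self φ w
    _ ≤ ∫⁻ x, ψ x + ψ (-x) := lintegral_mono hφψ
    _ = ENNReal.ofReal (2 * (ρ ^ (p + 1) / (p + 1))) := by
        have : 0 ≤ ρ ^ (p + 1) / (p + 1) := div_nonneg (Real.rpow_nonneg hρ _) (by linarith)
        rw [lintegral_add_left hψ, lintegral_neg_eq_self ψ, lintegral_indicator measurableSet_Icc,
          lintegral_Icc_rpow hp hρ, two_mul, ENNReal.ofReal_add this this]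

lemma circDist_one_eq_abs {u v : ℝ} (h : |u - v| ≤ 1 / 2) : circDist 1 u v = |u - v| := by
  have hbdd : BddBelow (range fun k : ℤ => |u - v + k * 1|) :=
    ⟨0, by rintro _ ⟨k, rfl⟩; positivity⟩
  unfold circDist
  refine le_antisymm (by simpa using ciInf_le hbdd 0) (le_ciInf fun k => ?_)
  rcases eq_or_ne k 0 with rfl | hk
  · simp
  · have hk1 : (1 : ℝ) ≤ |(k : ℝ)| := by exact_mod_cast Int.one_le_abs hk
    have htri := abs_sub (u - v + k * 1) (u - v)
    rw [add_sub_cancel_left, mul_one] at htri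
    rw [mul_one]
    linarith

lemma mul_dist_le_dist_of_mul_circDist_le {X : Type*} [PseudoMetricSpace X] {γ : ℝ → X} {c δ : ℝ}
    (hca : ∀ u v, circDist 1 u v ≤ δ → c * circDist 1 u v ≤ dist (γ u) (γ v)) (hδ : δ ≤ 1 / 2)
    (u v : ℝ) (huv : dist u v ≤ δ) : c * dist u v ≤ dist (γ u) (γ v) := by
  rw [Real.dist_eq] at huv ⊢
  have hcirc := circDist_one_eq_abs (huv.trans hδ)
  exact hcirc ▸ hca u v (hcirc ▸ huv)

lemma IsCompact.exists_half_mul_dist_le_dist {α X : Type*} [PseudoMetricSpace α]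
    [PseudoMetricSpace X] {γ : α → X} {s : Set α} {c : ℝ} (hs : IsCompact s) (hne : s.Nonempty)
    (hγ : ContinuousOn γ s) (hca : ∀ v ∈ s, ∀ w ∈ s, c * dist v w ≤ dist (γ v) (γ w)) (x : X) :
    ∃ w, ∀ v ∈ s, c / 2 * dist v w ≤ dist x (γ v) := by
  obtain ⟨w, hws, hmin⟩ :=
    hs.exists_isMinOn hne ((continuous_const.dist continuous_id).comp_continuousOn hγ)
  refine ⟨w, fun v hv => ?_⟩
  have hxw : dist x (γ w) ≤ dist x (γ v) := hmin hv
  linarith [hca v hv w hws, dist_triangle_left (γ v) (γ w) x]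

section ChordArc

variable {X : Type*} [PseudoMetricSpace X] {γ : ℝ → X} {c δ p ρ : ℝ}

lemma setLIntegral_indicator_rpow_dist_le {s : Set ℝ} (hs : IsCompact s) (hγ : ContinuousOn γ s)
    (hca : ∀ v ∈ s, ∀ w ∈ s, c * dist v w ≤ dist (γ v) (γ w)) (hc : 0 < c)
    (hp : p ∈ Ioo (-1) 0) (hρ : 0 ≤ ρ) (x : X) :
    ∫⁻ v in s, {v | dist x (γ v) ≤ c / 2 * ρ}.indicator
        (fun v => ENNReal.ofReal (dist x (γ v) ^ p)) v ≤
      ENNReal.ofReal ((c / 2) ^ p * (2 * (ρ ^ (p + 1) / (p + 1)))) := by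
  rcases s.eq_empty_or_nonempty with rfl | hne
  · simp
  obtain ⟨w, hw⟩ := hs.exists_half_mul_dist_le_dist hne hγ hca x
  have hpoint : ∀ v ∈ s, v ≠ w → {v | dist x (γ v) ≤ c / 2 * ρ}.indicator
      (fun v => ENNReal.ofReal (dist x (γ v) ^ p)) v ≤
      ENNReal.ofReal ((c / 2) ^ p) * (closedBall w ρ).indicator
        (fun v => ENNReal.ofReal (dist v w ^ p)) v := by
    intro v hvs hvw
    by_cases hv : v ∈ {v | dist x (γ v) ≤ c / 2 * ρ}
    · have hpos : 0 < c / 2 * dist v w := by positivity [dist_pos.2 hvw]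
      have hvρ : dist v w ≤ ρ := le_of_mul_le_mul_left ((hw v hvs).trans hv) (half_pos hc)
      rw [indicator_of_mem hv, indicator_of_mem (mem_closedBall.2 hvρ),
        ← ENNReal.ofReal_mul (by positivity), ← Real.mul_rpow (by positivity) dist_nonneg]
      exact ENNReal.ofReal_le_ofReal (Real.rpow_le_rpow_of_nonpos hpos (hw v hvs) hp.2.le)
    · rw [indicator_of_notMem hv]
      exact zero_le
  calc _ ≤ ∫⁻ v in s, ENNReal.ofReal ((c / 2) ^ p) * (closedBall w ρ).indicator
        (fun v => ENNReal.ofReal (dist v w ^ p)) v := by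
        -- only a.e.: at `v = w` the right-hand side is `ofReal (0 ^ p) = 0`
        refine lintegral_mono_ae ?_
        filter_upwards [ae_restrict_mem hs.measurableSet,
          ae_restrict_of_ae ((countable_singleton w).ae_notMem volume)] with v hvs hvw
        exact hpoint v hvs hvw
    _ ≤ ∫⁻ v, ENNReal.ofReal ((c / 2) ^ p) * (closedBall w ρ).indicator
        (fun v => ENNReal.ofReal (dist v w ^ p)) v := setLIntegral_le_lintegral _ _
    _ ≤ _ := by
        rw [lintegral_const_mul' _ _ ENNReal.ofReal_ne_top,
          lintegral_indicator measurableSet_closedBall,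
          ENNReal.ofReal_mul (Real.rpow_nonneg (by positivity) p)]
        gcongr
        exact lintegral_closedBall_rpow_dist_le hp.1 w hρ

lemma setLIntegral_prod_indicator_rpow_dist_le (hγ : Continuous γ)
    (hca : ∀ v w, dist v w ≤ δ → c * dist v w ≤ dist (γ v) (γ w)) (hc : 0 < c)
    (hp : p ∈ Ioo (-1) 0) (hρ : 0 ≤ ρ) (U : Set ℝ) {V : Set ℝ} {t : Finset ℝ}
    (hV : V ⊆ ⋃ y ∈ t, closedBall y (δ / 2)) :
    ∫⁻ q in U ×ˢ V, {q : ℝ × ℝ | dist (γ q.1) (γ q.2) ≤ c / 2 * ρ}.indicator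
        (fun q => ENNReal.ofReal (dist (γ q.1) (γ q.2) ^ p)) q ≤
      volume U * (t.card * ENNReal.ofReal ((c / 2) ^ p * (2 * (ρ ^ (p + 1) / (p + 1))))) := by
  set B := ENNReal.ofReal ((c / 2) ^ p * (2 * (ρ ^ (p + 1) / (p + 1))))
  have hfiber : ∀ u y, ∫⁻ v in closedBall y (δ / 2),
      {v | dist (γ u) (γ v) ≤ c / 2 * ρ}.indicator
        (fun v => ENNReal.ofReal (dist (γ u) (γ v) ^ p)) v ≤ B := by
    refine fun u y => setLIntegral_indicator_rpow_dist_le (isCompact_closedBall y _)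
      hγ.continuousOn (fun v hv w hw => hca v w ?_) hc hp hρ _
    linarith [dist_triangle_right v w y, mem_closedBall.1 hv, mem_closedBall.1 hw]
  have hdist : Continuous fun q : ℝ × ℝ => dist (γ q.1) (γ q.2) := hγ.fst'.dist hγ.snd'
  have hmeas : Measurable ({q : ℝ × ℝ | dist (γ q.1) (γ q.2) ≤ c / 2 * ρ}.indicator
      (fun q => ENNReal.ofReal (dist (γ q.1) (γ q.2) ^ p))) :=
    (hdist.measurable.pow_const p).ennreal_ofReal.indicator
      (measurableSet_le hdist.measurable measurable_const)
  rw [Measure.volume_eq_prod, setLIntegral_prod _ hmeas.aemeasurable, mul_comm (volume U),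
    ← setLIntegral_const]
  refine setLIntegral_mono measurable_const fun u _ => ?_
  calc _ ≤ ∫⁻ v in ⋃ y ∈ t, closedBall y (δ / 2), {v | dist (γ u) (γ v) ≤ c / 2 * ρ}.indicator
        (fun v => ENNReal.ofReal (dist (γ u) (γ v) ^ p)) v := lintegral_mono_set hV
    _ ≤ ∑ y ∈ t, B :=
        (lintegral_biUnion_finset_le _ _ _).trans (Finset.sum_le_sum fun y _ => hfiber u y)
    _ = t.card * B := by rw [Finset.sum_const, nsmul_eq_mul]

lemma eLpNorm_indicator_rpow_dist_le (hγ : Continuous γ)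
    (hca : ∀ v w, dist v w ≤ δ → c * dist v w ≤ dist (γ v) (γ w)) (hc : 0 < c)
    (hp : p ∈ Ioo (-1) 0) (hρ : 0 < ρ) (U : Set ℝ) {V : Set ℝ} {t : Finset ℝ}
    (hV : V ⊆ ⋃ y ∈ t, closedBall y (δ / 2)) :
    eLpNorm ({q : ℝ × ℝ | ((c / 2 * ρ) ^ p).toNNReal ≤ ‖dist (γ q.1) (γ q.2) ^ p‖₊}.indicator
        fun q => dist (γ q.1) (γ q.2) ^ p) 1 (volume.restrict (U ×ˢ V)) ≤
      volume U * (t.card * ENNReal.ofReal ((c / 2) ^ p * (2 * (ρ ^ (p + 1) / (p + 1))))) := by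
  rw [eLpNorm_one_eq_lintegral_enorm]
  refine le_trans (lintegral_mono fun q => ?_)
    (setLIntegral_prod_indicator_rpow_dist_le hγ hca hc hp hρ.le U hV)
  by_cases hq : q ∈ {q : ℝ × ℝ | ((c / 2 * ρ) ^ p).toNNReal ≤ ‖dist (γ q.1) (γ q.2) ^ p‖₊}
  · have hle : (c / 2 * ρ) ^ p ≤ dist (γ q.1) (γ q.2) ^ p := by
      simpa [Real.toNNReal_le_iff_le_coe, abs_of_nonneg (Real.rpow_nonneg dist_nonneg p)]
        using hq
    have hd : 0 < dist (γ q.1) (γ q.2) := by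
      refine dist_nonneg.lt_of_ne fun h => ?_
      rw [← h, Real.zero_rpow hp.2.ne] at hle
      exact (Real.rpow_pos_of_pos (by positivity) p).not_ge hle
    have hdρ : q ∈ {q : ℝ × ℝ | dist (γ q.1) (γ q.2) ≤ c / 2 * ρ} :=
      (Real.rpow_le_rpow_iff_of_neg (by positivity) hd hp.2).1 hle
    rw [indicator_of_mem hq, indicator_of_mem hdρ,
      Real.enorm_eq_ofReal (Real.rpow_nonneg dist_nonneg p)]
  · rw [indicator_of_notMem hq, enorm_zero]
    exact zero_le

end ChordArc

theorem uniform_integrability_negative_power_kernels_general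
    (p : ℝ) (hp : p ∈ Set.Ioo (-1 : ℝ) 0)
    (ηm : ℕ → ℝ → EuclideanSpace ℝ (Fin 3))
    (hηm : ∀ m, Continuous (ηm m))
    (c δ : ℝ) (hc : 0 < c) (hδ : δ ∈ Set.Ioc (0:ℝ) (1/2))
    (hchordarc : ∀ m, ∀ u v : ℝ, circDist 1 u v ≤ δ →
      c * circDist 1 u v ≤ ‖ηm m u - ηm m v‖) :
    (∀ m, IntegrableOn (fun q : ℝ × ℝ => ‖ηm m q.1 - ηm m q.2‖ ^ p)
        (Set.Icc 0 1 ×ˢ Set.Icc 0 1) volume) ∧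
      ∀ ε > (0:ℝ), ∃ δ' > (0:ℝ), ∀ m, ∀ A : Set (ℝ × ℝ),
        MeasurableSet A → A ⊆ Set.Icc 0 1 ×ˢ Set.Icc 0 1 →
        volume A ≤ ENNReal.ofReal δ' →
        ∫ q in A, ‖ηm m q.1 - ηm m q.2‖ ^ p ≤ ε := by
  simp only [← dist_eq_norm] at hchordarc ⊢
  have hca m := mul_dist_le_dist_of_mul_circDist_le (hchordarc m) hδ.2
  obtain ⟨t, -, hcover⟩ := isCompact_Icc.elim_nhds_subcover (fun y : ℝ => closedBall y (δ / 2))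
    fun y _ => closedBall_mem_nhds y (half_pos hδ.1)
  have : IsFiniteMeasure (volume.restrict (Icc (0 : ℝ) 1 ×ˢ Icc (0 : ℝ) 1)) :=
    isFiniteMeasure_restrict.2 (isCompact_Icc.prod isCompact_Icc).measure_lt_top.ne
  have hUI : UniformIntegrable (fun m (q : ℝ × ℝ) => dist (ηm m q.1) (ηm m q.2) ^ p) 1
      (volume.restrict (Icc 0 1 ×ˢ Icc 0 1)) := by
    refine uniformIntegrable_of le_rfl ENNReal.one_ne_top
      (fun m => (((hηm m).fst'.dist (hηm m).snd').measurable.pow_const p).aestronglyMeasurable)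
      fun ε hε => ?_
    obtain ⟨ρ, hρ, hsmall⟩ := exists_pos_mul_rpow_le (q := p + 1) (by linarith [hp.1])
      (t.card * ((c / 2) ^ p * 2 / (p + 1))) hε
    refine ⟨((c / 2 * ρ) ^ p).toNNReal, fun m =>
      (eLpNorm_indicator_rpow_dist_le (hηm m) (hca m) hc hp hρ _ hcover).trans ?_⟩
    rw [Real.volume_Icc, sub_zero, ENNReal.ofReal_one, one_mul, ← ENNReal.ofReal_natCast,
      ← ENNReal.ofReal_mul (Nat.cast_nonneg _)]
    exact ENNReal.ofReal_le_ofReal (le_of_eq_of_le (by ring) hsmall)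
  exact ⟨fun m => memLp_one_iff_integrable.1 (hUI.memLp m),
    fun ε hε => hUI.unifIntegrable.exists_setIntegral_le hε⟩

theorem uniform_integrability_negative_power_kernels
    (p : ℝ) (hp : p ∈ Set.Ioo (-1 : ℝ) 0)
    (η : ℝ → EuclideanSpace ℝ (Fin 3)) (ηm : ℕ → ℝ → EuclideanSpace ℝ (Fin 3))
    (hη : Continuous η) (hηm : ∀ m, Continuous (ηm m))
    (hperη : ∀ u, η (u + 1) = η u) (hperηm : ∀ m u, ηm m (u + 1) = ηm m u)
    (hconv : TendstoUniformly ηm η atTop)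
    (hinj : Set.InjOn η (Set.Ico 0 1))
    (c δ : ℝ) (hc : 0 < c) (hδ : δ ∈ Set.Ioc (0:ℝ) (1/2))
    (hchordarc : ∀ m, ∀ u v : ℝ, circDist 1 u v ≤ δ →
      c * circDist 1 u v ≤ ‖ηm m u - ηm m v‖) :
    (∀ m, IntegrableOn (fun q : ℝ × ℝ => ‖ηm m q.1 - ηm m q.2‖ ^ p)
        (Set.Icc 0 1 ×ˢ Set.Icc 0 1) volume) ∧
      ∀ ε > (0:ℝ), ∃ δ' > (0:ℝ), ∀ m, ∀ A : Set (ℝ × ℝ),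
        MeasurableSet A → A ⊆ Set.Icc 0 1 ×ˢ Set.Icc 0 1 →
        volume A ≤ ENNReal.ofReal δ' →
        ∫ q in A, ‖ηm m q.1 - ηm m q.2‖ ^ p ≤ ε :=
  uniform_integrability_negative_power_kernels_general p hp ηm hηm c δ hc hδ hchordarc
end
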